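/- Let X be a stationary random set with locally finite perimeter such that the measure B ↦ E|D1_X|(B) is locally finite. Then E|D1_X| is a translation-invariant locally finite Borel measure on ℝ^d and hence equals \bar{P}(X)·H^d for a constant \bar{P}(X) ∈ [0,∞), i.e., E|D1_X|(B) = \bar{P}(X) H^d(B) for all Borel B. -/

import Mathlib

open MeasureTheory Metric Filter Bornology
open scoped ENNReal NNReal Topology Real symmDiff

noncomputable section

variable {V : Type*} [NormedAddCommGroup V] [InnerProductSpace ℝ V]
  [FiniteDimensional ℝ V] [MeasurableSpace V] [BorelSpace V]

/-- Divergence of a vector field, computed via an orthonormal basis. -/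
def divg (φ : V → V) (x : V) : ℝ :=
  ∑ i, (inner ℝ ((fderiv ℝ φ x) (stdOrthonormalBasis ℝ V i)) (stdOrthonormalBasis ℝ V i) : ℝ)

/-- Variation of `f` in a set `U` (De Giorgi's definition via test vector fields
supported in `U`), with respect to the intrinsic (Hausdorff) measure of `V`. -/
def varIn (f : V → ℝ) (U : Set V) : ℝ≥0∞ :=
  ⨆ φ : {φ : V → V // ContDiff ℝ 1 φ ∧ HasCompactSupport φ ∧ tsupport φ ⊆ U ∧ ∀ x, ‖φ x‖ ≤ 1},
    ENNReal.ofReal (∫ x, f x * divg φ.1 x ∂μH[(Module.finrank ℝ V : ℝ)])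

/-- The total variation measure `|Df|` evaluated on an arbitrary set `B`
(by outer regularity: infimum over open neighbourhoods of `B`). -/
def varOn (f : V → ℝ) (B : Set V) : ℝ≥0∞ :=
  ⨅ U : {U : Set V // IsOpen U ∧ B ⊆ U}, varIn f U.1

/-- Total variation `V f` of `f`. -/
def totalVar (f : V → ℝ) : ℝ≥0∞ := varIn f Set.univ

/-- Perimeter of a set `A`: the total variation of its indicator function. -/
def Perim (A : Set V) : ℝ≥0∞ := totalVar (A.indicator (fun _ => (1 : ℝ)))

/-- `A` has locally finite perimeter: finite variation in every bounded open set. -/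
def HasLocFinPerimeter (A : Set V) : Prop :=
  ∀ U : Set V, IsOpen U → IsBounded U → varIn (A.indicator (fun _ => (1 : ℝ))) U < ⊤

/-- Variation of the projected derivative `D_L f = p_L ∘ Df` in a set `U`:
the test vector fields are constrained to take values in the subspace `L`. -/
def varInSub (f : V → ℝ) (L : Submodule ℝ V) (U : Set V) : ℝ≥0∞ :=
  ⨆ φ : {φ : V → V // ContDiff ℝ 1 φ ∧ HasCompactSupport φ ∧ tsupport φ ⊆ U ∧
      (∀ x, ‖φ x‖ ≤ 1) ∧ ∀ x, φ x ∈ L},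
    ENNReal.ofReal (∫ x, f x * divg φ.1 x ∂μH[(Module.finrank ℝ V : ℝ)])

/-- The total variation measure `|D_L f|` evaluated on an arbitrary set. -/
def varOnSub (f : V → ℝ) (L : Submodule ℝ V) (B : Set V) : ℝ≥0∞ :=
  ⨅ U : {U : Set V // IsOpen U ∧ B ⊆ U}, varInSub f L U.1

/-!
For a fixed set `A`, the set function `B ↦ |D1_A|(B)` (`varOn`, the outer-regular extension of
the De Giorgi variation `varIn` of open sets) is a metric outer measure: it is countably
subadditive because a smooth partition of unity splits every test field over a cover, and additive
on positively separated sets because test fields supported in disjoint open sets add up. By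
Carathéodory's criterion it restricts to a Borel measure, and `E|D1_X|` is the mixture
`P.bind (ω ↦ |D1_{X ω}|)`. The variation commutes with translations since Hausdorff measure is
translation invariant, so stationarity makes `E|D1_X|` translation invariant; being finite on
compacts, it is a multiple of Lebesgue measure by uniqueness of Haar measure.
-/

theorem Metric.AreSeparated.separatedNhds {X : Type*} [PseudoEMetricSpace X] {s t : Set X}
    (h : Metric.AreSeparated s t) : SeparatedNhds s t := by
  obtain ⟨r, hr, hst⟩ := h
  have hr2 : 0 < r / 2 := ENNReal.half_pos hr
  refine ⟨⋃ x ∈ s, Metric.eball x (r / 2), ⋃ y ∈ t, Metric.eball y (r / 2),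
    isOpen_biUnion fun _ _ => Metric.isOpen_eball, isOpen_biUnion fun _ _ => Metric.isOpen_eball,
    fun x hx => Set.mem_biUnion hx (Metric.mem_eball_self hr2),
    fun y hy => Set.mem_biUnion hy (Metric.mem_eball_self hr2), ?_⟩
  refine Set.disjoint_left.mpr fun z hzs hzt => ?_
  obtain ⟨x, hx, hzx⟩ := Set.mem_iUnion₂.mp hzs
  obtain ⟨y, hy, hzy⟩ := Set.mem_iUnion₂.mp hzt
  refine (hst x hx y hy).not_gt ?_
  calc edist x y ≤ edist z x + edist z y := edist_triangle_left _ _ _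
    _ < r / 2 + r / 2 := ENNReal.add_lt_add hzx hzy
    _ = r := ENNReal.add_halves r

section TestField

variable {E : Type*} [NormedAddCommGroup E] [NormedSpace ℝ E]

def IsTestField (U : Set E) (φ : E → E) : Prop :=
  ContDiff ℝ 1 φ ∧ HasCompactSupport φ ∧ tsupport φ ⊆ U ∧ ∀ x, ‖φ x‖ ≤ 1

instance IsTestField.nonempty (U : Set E) : Nonempty {φ : E → E // IsTestField U φ} :=
  ⟨⟨0, contDiff_const, HasCompactSupport.zero, by simp, by simp⟩⟩

theorem IsTestField.mono {U U' : Set E} {φ : E → E} (hφ : IsTestField U φ) (h : U ⊆ U') :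
    IsTestField U' φ :=
  ⟨hφ.1, hφ.2.1, hφ.2.2.1.trans h, hφ.2.2.2⟩

theorem IsTestField.eq_zero_of_empty {φ : E → E} (hφ : IsTestField ∅ φ) : φ = 0 := by
  simpa [tsupport, Function.support_eq_empty_iff] using hφ.2.2.1

theorem IsTestField.exists_eq_sum [FiniteDimensional ℝ E] {ι : Type*} {U : ι → Set E}
    (hU : ∀ i, IsOpen (U i)) {φ : E → E} (hφ : IsTestField (⋃ i, U i) φ) :
    ∃ (t : Finset ι) (ψ : ι → E → E), (∀ i, IsTestField (U i) (ψ i)) ∧ φ = ∑ i ∈ t, ψ i := by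
  obtain ⟨hφ₁, hφc, hφU, hφb⟩ := hφ
  obtain ⟨ρ, hρ⟩ := SmoothPartitionOfUnity.exists_isSubordinate (modelWithCornersSelf ℝ E)
    (isClosed_tsupport φ) U hU hφU
  have hfin := ρ.locallyFinite.finite_nonempty_inter_compact hφc
  refine ⟨hfin.toFinset, fun i x => ρ i x • φ x, fun i => ⟨?_, ?_, ?_, fun x => ?_⟩, ?_⟩
  · exact ((contMDiff_iff_contDiff.mp (ρ i).contMDiff).of_le (by norm_cast)).smul hφ₁
  · exact hφc.smul_left
  · exact (tsupport_smul_subset_left _ _).trans (hρ i)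
  · rw [norm_smul, Real.norm_of_nonneg (ρ.nonneg i x)]
    exact mul_le_one₀ (ρ.le_one i x) (norm_nonneg _) (hφb x)
  · funext x
    rw [Finset.sum_apply, ← Finset.sum_smul]
    by_cases hx : x ∈ tsupport φ
    · rw [← finsum_eq_sum_of_support_subset _ fun i hi => ?_, ρ.sum_eq_one hx, one_smul]
      exact hfin.mem_toFinset.mpr ⟨x, hi, hx⟩
    · simp [image_eq_zero_of_notMem_tsupport hx]

theorem IsTestField.add_of_disjoint {U₁ U₂ : Set E} {φ₁ φ₂ : E → E} (h₁ : IsTestField U₁ φ₁)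
    (h₂ : IsTestField U₂ φ₂) (hU : Disjoint U₁ U₂) : IsTestField (U₁ ∪ U₂) (φ₁ + φ₂) := by
  obtain ⟨hC₁, hc₁, hs₁, hb₁⟩ := h₁
  obtain ⟨hC₂, hc₂, hs₂, hb₂⟩ := h₂
  refine ⟨hC₁.add hC₂, hc₁.add hc₂,
    (tsupport_add φ₁ φ₂).trans (Set.union_subset_union hs₁ hs₂), fun x => ?_⟩
  by_cases hx : x ∈ tsupport φ₁
  · have : x ∉ tsupport φ₂ := fun hx₂ => hU.notMem_of_mem_left (hs₁ hx) (hs₂ hx₂)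
    simpa [image_eq_zero_of_notMem_tsupport this] using hb₁ x
  · simpa [image_eq_zero_of_notMem_tsupport hx] using hb₂ x

theorem IsTestField.comp_add_right {U : Set E} {φ : E → E} (hφ : IsTestField U φ) (z : E) :
    IsTestField ((· + z) ⁻¹' U) (fun x => φ (x + z)) := by
  obtain ⟨hC, hc, hs, hb⟩ := hφ
  refine ⟨hC.comp (contDiff_id.add contDiff_const), hc.comp_homeomorph (Homeomorph.addRight z),
    ?_, fun x => hb _⟩
  exact (tsupport_comp_eq_preimage φ (Homeomorph.addRight z)).trans_subset
    (Set.preimage_mono hs)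

end TestField

section Divergence

variable {E : Type*} [NormedAddCommGroup E] [InnerProductSpace ℝ E] [FiniteDimensional ℝ E]

theorem divg_eq_zero_of_notMem_tsupport {φ : E → E} {x : E} (hx : x ∉ tsupport φ) :
    divg φ x = 0 := by
  have hφ : φ =ᶠ[𝓝 x] fun _ => 0 :=
    Filter.eventually_of_mem ((isClosed_tsupport φ).isOpen_compl.mem_nhds hx)
      fun _ hy => image_eq_zero_of_notMem_tsupport hy
  simp [divg, hφ.fderiv_eq]

theorem continuous_divg {φ : E → E} (hφ : ContDiff ℝ 1 φ) : Continuous (divg φ) :=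
  continuous_finsetSum _ fun _ _ =>
    ((hφ.continuous_fderiv one_ne_zero).clm_apply continuous_const).inner continuous_const

theorem HasCompactSupport.divg {φ : E → E} (hφ : HasCompactSupport φ) :
    HasCompactSupport (divg φ) :=
  HasCompactSupport.intro hφ fun _ hx => divg_eq_zero_of_notMem_tsupport hx

theorem divg_finset_sum {ι : Type*} (t : Finset ι) {ψ : ι → E → E} {x : E}
    (hψ : ∀ i ∈ t, DifferentiableAt ℝ (ψ i) x) :
    divg (∑ i ∈ t, ψ i) x = ∑ i ∈ t, divg (ψ i) x := by
  simp only [divg, Finset.sum_fn, fderiv_fun_sum hψ, sum_apply, sum_inner]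
  exact Finset.sum_comm

theorem divg_comp_add_right {φ : E → E} (hφ : ContDiff ℝ 1 φ) (z x : E) :
    divg (fun y => φ (y + z)) x = divg φ (x + z) := by
  have h : HasFDerivAt (fun y => φ (y + z)) (fderiv ℝ φ (x + z)) x := by
    simpa [Function.comp_def] using ((hφ.differentiable one_ne_zero) (x + z)).hasFDerivAt.comp x
      ((hasFDerivAt_id x).add_const z)
  rw [divg, divg, h.fderiv]

theorem divg_add {φ ψ : E → E} {x : E} (hφ : DifferentiableAt ℝ φ x)
    (hψ : DifferentiableAt ℝ ψ x) : divg (φ + ψ) x = divg φ x + divg ψ x := by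
  simp only [divg, fderiv_add hφ hψ, add_apply, inner_add_left, Finset.sum_add_distrib]

theorem divg_zero : divg (0 : E → E) = 0 := by
  funext x
  simp [divg]

end Divergence

section Variation

local notation "μV" => (μH[(Module.finrank ℝ V : ℝ)] : Measure V)

variable {f : V → ℝ}

theorem varIn_eq_iSup (f : V → ℝ) (U : Set V) :
    varIn f U =
      ⨆ φ : {φ // IsTestField U φ}, ENNReal.ofReal (∫ x, f x * divg φ.1 x ∂μV) :=
  rfl

theorem ofReal_integral_le_varIn (f : V → ℝ) {U : Set V} {φ : V → V}
    (hφ : IsTestField U φ) :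
    ENNReal.ofReal (∫ x, f x * divg φ x ∂μV) ≤ varIn f U :=
  (varIn_eq_iSup f U).symm ▸ le_iSup_of_le ⟨φ, hφ⟩ le_rfl

theorem varIn_le {U : Set V} {c : ℝ≥0∞}
    (h : ∀ φ, IsTestField U φ → ENNReal.ofReal (∫ x, f x * divg φ x ∂μV) ≤ c) :
    varIn f U ≤ c :=
  (varIn_eq_iSup f U).symm ▸ iSup_le fun φ => h φ.1 φ.2

theorem varIn_mono (f : V → ℝ) {U U' : Set V} (h : U ⊆ U') : varIn f U ≤ varIn f U' :=
  varIn_le fun _ hφ => ofReal_integral_le_varIn f (hφ.mono h)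

theorem varIn_empty (f : V → ℝ) : varIn f ∅ = 0 :=
  le_zero_iff.mp <| varIn_le fun _ hφ => by simp [hφ.eq_zero_of_empty, divg_zero]

theorem IsTestField.integrable_mul_divg (hf : LocallyIntegrable f μV) {U : Set V} {φ : V → V}
    (hφ : IsTestField U φ) : Integrable (fun x => f x * divg φ x) μV :=
  hf.integrable_smul_right_of_hasCompactSupport (continuous_divg hφ.1) hφ.2.1.divg

theorem varIn_add_varIn_le (hf : LocallyIntegrable f μV) {U₁ U₂ U : Set V}
    (hd : Disjoint U₁ U₂) (h₁ : U₁ ⊆ U) (h₂ : U₂ ⊆ U) : varIn f U₁ + varIn f U₂ ≤ varIn f U := by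
  rw [varIn_eq_iSup, varIn_eq_iSup, ENNReal.iSup_add]
  refine iSup_le fun ⟨φ₁, hφ₁⟩ => ?_
  rw [ENNReal.add_iSup]
  refine iSup_le fun ⟨φ₂, hφ₂⟩ => ?_
  set I₁ := ∫ x, f x * divg φ₁ x ∂μV
  set I₂ := ∫ x, f x * divg φ₂ x ∂μV
  rcases le_or_gt I₁ 0 with hI₁ | hI₁
  · rw [ENNReal.ofReal_of_nonpos hI₁, zero_add]
    exact ofReal_integral_le_varIn f (hφ₂.mono h₂)
  rcases le_or_gt I₂ 0 with hI₂ | hI₂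
  · rw [ENNReal.ofReal_of_nonpos hI₂, add_zero]
    exact ofReal_integral_le_varIn f (hφ₁.mono h₁)
  have hsum : I₁ + I₂ = ∫ x, f x * divg (φ₁ + φ₂) x ∂μV := by
    rw [← integral_add (hφ₁.integrable_mul_divg hf) (hφ₂.integrable_mul_divg hf)]
    simp only [divg_add (hφ₁.1.differentiable one_ne_zero _)
      (hφ₂.1.differentiable one_ne_zero _), mul_add]
  rw [← ENNReal.ofReal_add hI₁.le hI₂.le, hsum]
  exact ofReal_integral_le_varIn f
    ((hφ₁.add_of_disjoint hφ₂ hd).mono (Set.union_subset h₁ h₂))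

theorem varIn_iUnion_le {ι : Type*} (hf : LocallyIntegrable f μV) {U : ι → Set V}
    (hU : ∀ i, IsOpen (U i)) : varIn f (⋃ i, U i) ≤ ∑' i, varIn f (U i) := by
  refine varIn_le fun φ hφ => ?_
  obtain ⟨t, ψ, hψ, rfl⟩ := hφ.exists_eq_sum hU
  have hsplit : ∫ x, f x * divg (∑ i ∈ t, ψ i) x ∂μV =
      ∑ i ∈ t, ∫ x, f x * divg (ψ i) x ∂μV := by
    rw [← integral_finsetSum t fun i _ => (hψ i).integrable_mul_divg hf]
    simp only [divg_finset_sum t fun i _ => (hψ i).1.differentiable one_ne_zero _,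
      Finset.mul_sum]
  calc ENNReal.ofReal (∫ x, f x * divg (∑ i ∈ t, ψ i) x ∂μV)
      ≤ ∑ i ∈ t, ENNReal.ofReal (∫ x, f x * divg (ψ i) x ∂μV) := by
        rw [hsplit]
        exact Finset.le_sum_of_subadditive _ ENNReal.ofReal_zero.le
          (fun _ _ => ENNReal.ofReal_add_le) _ _
    _ ≤ ∑ i ∈ t, varIn f (U i) :=
        Finset.sum_le_sum fun i _ => ofReal_integral_le_varIn f (hψ i)
    _ ≤ ∑' i, varIn f (U i) := ENNReal.sum_le_tsum t

theorem integral_mul_divg_comp_add_right (f : V → ℝ) {φ : V → V} (hφ : ContDiff ℝ 1 φ)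
    (z : V) :
    ∫ x, f (x + z) * divg (fun y => φ (y + z)) x ∂μV = ∫ x, f x * divg φ x ∂μV := by
  simp only [divg_comp_add_right hφ]
  exact integral_add_right_eq_self (fun x => f x * divg φ x) z

theorem varIn_le_varIn_comp_add_right (f : V → ℝ) (z : V) (U : Set V) :
    varIn f U ≤ varIn (fun x => f (x + z)) ((· + z) ⁻¹' U) :=
  varIn_le fun _ hφ => integral_mul_divg_comp_add_right f hφ.1 z ▸
    ofReal_integral_le_varIn _ (hφ.comp_add_right z)

theorem varIn_comp_add_right (f : V → ℝ) (z : V) (U : Set V) :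
    varIn (fun x => f (x + z)) ((· + z) ⁻¹' U) = varIn f U := by
  refine le_antisymm ?_ (varIn_le_varIn_comp_add_right f z U)
  simpa [Set.preimage_preimage] using
    varIn_le_varIn_comp_add_right (fun x => f (x + z)) (-z) ((· + z) ⁻¹' U)

theorem varOn_le_varIn (f : V → ℝ) {B U : Set V} (hU : IsOpen U) (hBU : B ⊆ U) :
    varOn f B ≤ varIn f U :=
  iInf_le_of_le ⟨U, hU, hBU⟩ le_rfl

theorem varOn_mono (f : V → ℝ) {B B' : Set V} (h : B ⊆ B') : varOn f B ≤ varOn f B' :=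
  le_iInf fun U => varOn_le_varIn f U.2.1 (h.trans U.2.2)

theorem varOn_empty (f : V → ℝ) : varOn f ∅ = 0 :=
  le_zero_iff.mp <| (varOn_le_varIn f isOpen_empty subset_rfl).trans_eq (varIn_empty f)

theorem exists_isOpen_varIn_lt {B : Set V} {c : ℝ≥0∞} (h : varOn f B < c) :
    ∃ U, IsOpen U ∧ B ⊆ U ∧ varIn f U < c := by
  obtain ⟨⟨U, hU, hBU⟩, hlt⟩ := iInf_lt_iff.mp h
  exact ⟨U, hU, hBU, hlt⟩

theorem varOn_iUnion_le {ι : Type*} [Countable ι] (hf : LocallyIntegrable f μV)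
    (B : ι → Set V) :
    varOn f (⋃ i, B i) ≤ ∑' i, varOn f (B i) := by
  refine ENNReal.le_of_forall_pos_le_add fun ε hε hfin => ?_
  obtain ⟨δ, hδ, hδε⟩ :=
    ENNReal.exists_pos_sum_of_countable' (ENNReal.coe_ne_zero.mpr hε.ne') ι
  have hU : ∀ i, ∃ U, IsOpen U ∧ B i ⊆ U ∧ varIn f U < varOn f (B i) + δ i := fun i =>
    exists_isOpen_varIn_lt <| ENNReal.lt_add_right
      (ENNReal.ne_top_of_tsum_ne_top hfin.ne i) (hδ i).ne'
  choose U hUo hBU hUlt using hU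
  calc varOn f (⋃ i, B i)
      ≤ varIn f (⋃ i, U i) := varOn_le_varIn f (isOpen_iUnion hUo) (Set.iUnion_mono hBU)
    _ ≤ ∑' i, varIn f (U i) := varIn_iUnion_le hf hUo
    _ ≤ ∑' i, (varOn f (B i) + δ i) := ENNReal.tsum_le_tsum fun i => (hUlt i).le
    _ = ∑' i, varOn f (B i) + ∑' i, δ i := ENNReal.tsum_add
    _ ≤ ∑' i, varOn f (B i) + ε := by gcongr

theorem varOn_add_varOn_le (hf : LocallyIntegrable f μV) {s t : Set V}
    (hst : SeparatedNhds s t) : varOn f s + varOn f t ≤ varOn f (s ∪ t) := by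
  obtain ⟨S, T, hS, hT, hsS, htT, hST⟩ := hst
  refine le_iInf fun ⟨W, hW, hsW⟩ => ?_
  calc varOn f s + varOn f t
      ≤ varIn f (W ∩ S) + varIn f (W ∩ T) := add_le_add
        (varOn_le_varIn f (hW.inter hS) (Set.subset_inter (Set.subset_union_left.trans hsW) hsS))
        (varOn_le_varIn f (hW.inter hT) (Set.subset_inter (Set.subset_union_right.trans hsW) htT))
    _ ≤ varIn f W := varIn_add_varIn_le hf
        (hST.mono Set.inter_subset_right Set.inter_subset_right)
        Set.inter_subset_left Set.inter_subset_left

theorem varOn_comp_add_right_le (f : V → ℝ) (z : V) (B : Set V) :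
    varOn (fun x => f (x + z)) ((· + z) ⁻¹' B) ≤ varOn f B :=
  le_iInf fun ⟨U, hU, hBU⟩ => (varIn_comp_add_right f z U).symm ▸
    varOn_le_varIn _ (hU.preimage (continuous_add_const z)) (Set.preimage_mono hBU)

theorem varOn_comp_add_right (f : V → ℝ) (z : V) (B : Set V) :
    varOn (fun x => f (x + z)) ((· + z) ⁻¹' B) = varOn f B := by
  refine le_antisymm (varOn_comp_add_right_le f z B) ?_
  simpa [Set.preimage_preimage] using
    varOn_comp_add_right_le (fun x => f (x + z)) (-z) ((· + z) ⁻¹' B)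

def varOuterMeasure (hf : LocallyIntegrable f μV) : OuterMeasure V where
  measureOf := varOn f
  empty := varOn_empty f
  mono := varOn_mono f
  iUnion_nat B _ := varOn_iUnion_le hf B

theorem isMetric_varOuterMeasure (hf : LocallyIntegrable f μV) :
    (varOuterMeasure hf).IsMetric :=
  fun _ _ hst => le_antisymm (measure_union_le _ _) (varOn_add_varOn_le hf hst.separatedNhds)

def varMeasure (hf : LocallyIntegrable f μV) : Measure V :=
  (varOuterMeasure hf).toMeasure
    (BorelSpace.measurable_eq.le.trans (isMetric_varOuterMeasure hf).borel_le_caratheodory)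

theorem varMeasure_apply (hf : LocallyIntegrable f μV) {B : Set V} (hB : MeasurableSet B) :
    varMeasure hf B = varOn f B :=
  toMeasure_apply _ _ hB

end Variation

theorem lintegral_comp_eq_of_map_eq {Ω α : Type*} [MeasurableSpace Ω] [MeasurableSpace α]
    {P : Measure Ω} [IsProbabilityMeasure P] {X Y : Ω → α} (hX : Measurable X)
    (hXY : P.map Y = P.map X) {g : α → ℝ≥0∞} (hg : Measurable g) :
    ∫⁻ ω, g (Y ω) ∂P = ∫⁻ ω, g (X ω) ∂P := by
  have := Measure.isProbabilityMeasure_map (μ := P) hX.aemeasurable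
  have hY : AEMeasurable Y P := aemeasurable_of_map_neZero (by rw [hXY]; infer_instance)
  rw [← lintegral_map' hg.aemeasurable hY, hXY, lintegral_map hg hX]

theorem varOn_indicator_preimage_add_right (A : Set V) (z : V) (B : Set V) :
    varOn (((· + z) ⁻¹' A).indicator fun _ => (1 : ℝ)) ((· + z) ⁻¹' B) =
      varOn (A.indicator fun _ => (1 : ℝ)) B := by
  rw [← varOn_comp_add_right _ z B]
  rfl

theorem statement19_general {d : ℕ} {Ω : Type*} [MeasurableSpace Ω] (P : Measure Ω)
    [IsProbabilityMeasure P] [mS : MeasurableSpace (Set (EuclideanSpace ℝ (Fin d)))]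
    (X : Ω → Set (EuclideanSpace ℝ (Fin d))) (hX : Measurable X)
    (hXm : ∀ ω, MeasurableSet (X ω))
    (hvar : ∀ B : Set (EuclideanSpace ℝ (Fin d)), MeasurableSet B →
      Measurable fun A : Set (EuclideanSpace ℝ (Fin d)) =>
        varOn (A.indicator (fun _ => (1 : ℝ))) B)
    (hstat : ∀ z : EuclideanSpace ℝ (Fin d),
      Measure.map (fun ω => (fun x => x + z) ⁻¹' X ω) P = Measure.map X P)
    (hEloc : ∀ K : Set (EuclideanSpace ℝ (Fin d)), IsCompact K →
      ∫⁻ ω, varOn ((X ω).indicator (fun _ => (1 : ℝ))) K ∂P < ⊤) :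
    (∀ z : EuclideanSpace ℝ (Fin d), ∀ B : Set (EuclideanSpace ℝ (Fin d)), MeasurableSet B →
        ∫⁻ ω, varOn ((X ω).indicator (fun _ => (1 : ℝ))) ((fun x => x + z) ⁻¹' B) ∂P
          = ∫⁻ ω, varOn ((X ω).indicator (fun _ => (1 : ℝ))) B ∂P) ∧
    ∃ c : ℝ≥0∞, c < ⊤ ∧ ∀ B : Set (EuclideanSpace ℝ (Fin d)), MeasurableSet B →
      ∫⁻ ω, varOn ((X ω).indicator (fun _ => (1 : ℝ))) B ∂P = c * volume B := by
  have hinv : ∀ z B, MeasurableSet B →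
      ∫⁻ ω, varOn ((X ω).indicator (fun _ => (1 : ℝ))) ((· + z) ⁻¹' B) ∂P
        = ∫⁻ ω, varOn ((X ω).indicator (fun _ => (1 : ℝ))) B ∂P := fun z B hB => by
    rw [← lintegral_comp_eq_of_map_eq hX (hstat z) (hvar _ (measurable_add_const z hB))]
    simp only [varOn_indicator_preimage_add_right]
  refine ⟨hinv, ?_⟩
  let κ ω := varMeasure ((locallyIntegrable_const (1 : ℝ)).indicator (hXm ω))
  have hκ : Measurable κ := Measure.measurable_of_measurable_coe κ fun B hB => by
    simp only [κ, varMeasure_apply _ hB]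
    exact (hvar B hB).comp hX
  set M := P.bind κ
  have hM : ∀ B, MeasurableSet B →
      M B = ∫⁻ ω, varOn ((X ω).indicator fun _ => (1 : ℝ)) B ∂P := fun B hB => by
    simp only [M, Measure.bind_apply hB hκ.aemeasurable, κ, varMeasure_apply _ hB]
  have : IsFiniteMeasureOnCompacts M := ⟨fun K hK => hM K hK.measurableSet ▸ hEloc K hK⟩
  have : M.IsAddLeftInvariant := ⟨fun z => Measure.ext fun B hB => by
    rw [Measure.map_apply (measurable_const_add z) hB, hM B hB, ← hinv z B hB, ← hM _]
    · simp_rw [add_comm z]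
    · exact measurable_add_const z hB⟩
  refine ⟨M.addHaarScalarFactor volume, ENNReal.coe_lt_top, fun B hB => ?_⟩
  rw [← hM B hB]
  exact congrArg (· B) (M.isAddLeftInvariant_eq_smul volume)

/-- Let `X` be a stationary random set with locally finite perimeter such
that `B ↦ E|D1_X|(B)` is locally finite. Then `E|D1_X|` is a translation-invariant locally
finite measure and hence equals `c · H^d` for a finite constant `c = \bar P(X)` (the
specific perimeter). -/
theorem statement19 {d : ℕ} {Ω : Type*} [MeasurableSpace Ω] (P : Measure Ω)
    [IsProbabilityMeasure P] [mS : MeasurableSpace (Set (EuclideanSpace ℝ (Fin d)))]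
    (X : Ω → Set (EuclideanSpace ℝ (Fin d))) (hX : Measurable X)
    (hXm : ∀ ω, MeasurableSet (X ω))
    (hXloc : ∀ ω, HasLocFinPerimeter (X ω))
    (hvar : ∀ B : Set (EuclideanSpace ℝ (Fin d)), MeasurableSet B →
      Measurable fun A : Set (EuclideanSpace ℝ (Fin d)) =>
        varOn (A.indicator (fun _ => (1 : ℝ))) B)
    (hstat : ∀ z : EuclideanSpace ℝ (Fin d),
      Measure.map (fun ω => (fun x => x + z) ⁻¹' X ω) P = Measure.map X P)
    (hEloc : ∀ K : Set (EuclideanSpace ℝ (Fin d)), IsCompact K →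
      ∫⁻ ω, varOn ((X ω).indicator (fun _ => (1 : ℝ))) K ∂P < ⊤) :
    (∀ z : EuclideanSpace ℝ (Fin d), ∀ B : Set (EuclideanSpace ℝ (Fin d)), MeasurableSet B →
        ∫⁻ ω, varOn ((X ω).indicator (fun _ => (1 : ℝ))) ((fun x => x + z) ⁻¹' B) ∂P
          = ∫⁻ ω, varOn ((X ω).indicator (fun _ => (1 : ℝ))) B ∂P) ∧
    ∃ c : ℝ≥0∞, c < ⊤ ∧ ∀ B : Set (EuclideanSpace ℝ (Fin d)), MeasurableSet B →
      ∫⁻ ω, varOn ((X ω).indicator (fun _ => (1 : ℝ))) B ∂P = c * volume B :=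
  statement19_general P (mS := mS) X hX hXm hvar hstat hEloc
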